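/- arXiv:1611.06389 — 2 statements merged into one kernel-verified Lean document; each statement's English description precedes it below -/
import Mathlib

section
/- Let →₀ and →₁ be binary relations on a set S. Set →₂ := →₀* ∘ →₁ and →₃ := →₀ ∪ →₁. Let a be an element of the domain of →₃ and let a' be a →₃-normal form of a. Set A := {b | a →₃* b} and let →₄ be the domain-restriction of →₃ to A. Assume: (1) the reverse of the range-restriction of →₀ to A is well-founded; (2) there is an upper bound n ∈ ℕ on the length of →₂-derivations starting from a and reaching a' by →₀*, i.e., m ≤ n for every m ∈ ℕ and every sequence b₀, …, b_m with a = b₀, b_i →₂ b_{i+1} for each i ∈ {0, …, m−1}, and b_m →₀* a'; (3) for all b₁, b₂ such that some c satisfies c →₄ b₁ and c →₁ b₂, there is d with b₁ →₄* d and b₂ →₄* d; (4) for all b₁, b₂ such that some c satisfies c →₄ b₁ and c →₀ b₂, there is d with b₁ →₄* d and b₂ →₄⁼ d. Then the reverse of →₄ is well-founded. -/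
open Relation

/-! Give each `c` reachable from `a` a count `k`: the number of `→₁`-steps on some path
`a →₃* c`. Once `c →₃* a'`, hypothesis (2) bounds `k` by `n`; a `→₁`-step raises the count,
and a `→₀`-step keeps it while descending in the well-founded order (1). Lexicographic
induction on `(n - k, c)` first shows, through the peak conditions (3) and (4), that every
element of `A` still reduces to `a'`; with the bound thus available everywhere in `A`, the same
induction makes every element of `A` accessible for the reverse of `→₃ ⊇ →₄`. -/

/-- `x = b₀ →₂ b₁ →₂ ⋯ →₂ bₘ →₀* z` with `→₂ = →₀* ∘ →₁`, the derivations bounded in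
hypothesis (2): an `r0 ∪ r1`-path from `x` to `z` with exactly `m` steps of `r1`. -/
def CountedPath {S : Type*} (r0 r1 : S → S → Prop) (x z : S) (m : ℕ) : Prop :=
  ∃ b : ℕ → S, b 0 = x ∧ (∀ i < m, Comp (ReflTransGen r0) r1 (b i) (b (i + 1))) ∧
    ReflTransGen r0 (b m) z

namespace CountedPath

variable {S : Type*} {r0 r1 : S → S → Prop} {x y z : S} {m : ℕ}

theorem refl (r0 r1 : S → S → Prop) (x : S) : CountedPath r0 r1 x x 0 :=
  ⟨fun _ => x, rfl, fun _ h => absurd h (Nat.not_lt_zero _), .refl⟩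

theorem tail_left (p : CountedPath r0 r1 x y m) (h : r0 y z) : CountedPath r0 r1 x z m :=
  let ⟨b, hb0, hb, hbm⟩ := p
  ⟨b, hb0, hb, hbm.tail h⟩

theorem tail_right (p : CountedPath r0 r1 x y m) (h : r1 y z) :
    CountedPath r0 r1 x z (m + 1) := by
  obtain ⟨b, hb0, hb, hbm⟩ := p
  refine ⟨fun i => if i ≤ m then b i else z, by simpa using hb0, fun i hi => ?_,
    by simpa using .refl⟩
  rcases Nat.lt_succ_iff_lt_or_eq.1 hi with hi | rfl
  · simpa [hi.le, Nat.succ_le_of_lt hi] using hb i hi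
  · simpa using ⟨_, hbm, h⟩

theorem exists_of_reflTransGen (h : ReflTransGen (r0 ⊔ r1) x y) :
    ∃ m, CountedPath r0 r1 x y m := by
  induction h with
  | refl => exact ⟨0, refl r0 r1 x⟩
  | tail _ h ih =>
    obtain ⟨m, p⟩ := ih
    rcases h with h | h
    · exact ⟨m, p.tail_left h⟩
    · exact ⟨m + 1, p.tail_right h⟩

theorem le_of_reflTransGen {a' : S} {n : ℕ}
    (hbound : ∀ m, CountedPath r0 r1 x a' m → m ≤ n)
    (p : CountedPath r0 r1 x y m) (h : ReflTransGen (r0 ⊔ r1) y a') : m ≤ n := by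
  induction h using ReflTransGen.head_induction_on generalizing m with
  | refl => exact hbound m p
  | head h _ ih =>
    rcases h with h | h
    · exact ih (p.tail_left h)
    · exact (Nat.le_succ m).trans (ih (p.tail_right h))

end CountedPath

theorem WellFounded.induction_bounded_lex {S : Type*} {r : S → S → Prop} (hr : WellFounded r)
    (n : ℕ) {P : ℕ → S → Prop}
    (ih : ∀ k c, (∀ k' c', k < k' → k' ≤ n → P k' c') → (∀ c', r c' c → P k c') → P k c)
    (k : ℕ) (c : S) : P k c := by
  induction hj : n - k using Nat.strong_induction_on generalizing k c with
  | _ j IH =>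
    induction c using hr.induction with
    | _ c IHc =>
      exact ih k c (fun k' c' hk hk' => IH (n - k') (by omega) k' c' rfl) IHc

section Klop

variable {S : Type*} {r0 r1 r4 : S → S → Prop} {a a' : S} {n : ℕ}

theorem reflTransGen_of_countedPath_of_step
    (hr4 : ∀ x y, r4 x y ↔ (r0 ⊔ r1) x y ∧ ReflTransGen (r0 ⊔ r1) a x)
    (hnf : ∀ b, ¬ (r0 ⊔ r1) a' b)
    (h1 : WellFounded (fun b c => r0 c b ∧ ReflTransGen (r0 ⊔ r1) a b))
    (hbound : ∀ m, CountedPath r0 r1 a a' m → m ≤ n)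
    (h3 : ∀ b₁ b₂, (∃ c, r4 c b₁ ∧ r1 c b₂) →
      ∃ d, ReflTransGen r4 b₁ d ∧ ReflTransGen r4 b₂ d)
    (h4 : ∀ b₁ b₂, (∃ c, r4 c b₁ ∧ r0 c b₂) →
      ∃ d, ReflTransGen r4 b₁ d ∧ ReflGen r4 b₂ d) (k : ℕ) (c : S) :
    CountedPath r0 r1 a c k → ReflTransGen (r0 ⊔ r1) c a' →
      ∀ b, r4 c b → ReflTransGen (r0 ⊔ r1) b a' := by
  have r4_le : ReflTransGen r4 ≤ ReflTransGen (r0 ⊔ r1) :=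
    ReflTransGen.mono fun x y h => ((hr4 x y).1 h).1
  induction k, c using h1.induction_bounded_lex n with
  | ih k c IHk IHc =>
    intro p hc b hb
    have hcA := ((hr4 c b).1 hb).2
    rcases hc.cases_head with rfl | ⟨c₁, hcc₁ | hcc₁, hc₁⟩
    · exact absurd ((hr4 _ b).1 hb).1 (hnf b)
    · obtain ⟨d, hbd, hc₁d⟩ := h4 b c₁ ⟨c, hb, hcc₁⟩
      refine (r4_le _ _ hbd).trans ?_
      rcases hc₁d with _ | hc₁d
      · exact hc₁
      · exact IHc c₁ ⟨hcc₁, hcA.tail (Or.inl hcc₁)⟩ (p.tail_left hcc₁) hc₁ d hc₁d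
    · obtain ⟨d, hbd, hc₁d⟩ := h3 b c₁ ⟨c, hb, hcc₁⟩
      refine (r4_le _ _ hbd).trans ?_
      -- `IHk` applies all along `c₁ →₄* d`: each element there is counted beyond `k`
      have key : ∀ e, ReflTransGen r4 c₁ e →
          ∃ k', k < k' ∧ CountedPath r0 r1 a e k' ∧ ReflTransGen (r0 ⊔ r1) e a' := by
        intro e he
        induction he with
        | refl => exact ⟨k + 1, k.lt_succ_self, p.tail_right hcc₁, hc₁⟩
        | tail _ hee' ih =>
          obtain ⟨k', hkk', p', he⟩ := ih
          have he' := IHk k' _ hkk' (p'.le_of_reflTransGen hbound he) p' he _ hee'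
          rcases ((hr4 _ _).1 hee').1 with h | h
          · exact ⟨k', hkk', p'.tail_left h, he'⟩
          · exact ⟨k' + 1, hkk'.trans k'.lt_succ_self, p'.tail_right h, he'⟩
      obtain ⟨-, -, -, hd⟩ := key d hc₁d
      exact hd

theorem reflTransGen_of_reachable
    (hr4 : ∀ x y, r4 x y ↔ (r0 ⊔ r1) x y ∧ ReflTransGen (r0 ⊔ r1) a x)
    (hnf₁ : ReflTransGen (r0 ⊔ r1) a a') (hnf₂ : ∀ b, ¬ (r0 ⊔ r1) a' b)
    (h1 : WellFounded (fun b c => r0 c b ∧ ReflTransGen (r0 ⊔ r1) a b))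
    (hbound : ∀ m, CountedPath r0 r1 a a' m → m ≤ n)
    (h3 : ∀ b₁ b₂, (∃ c, r4 c b₁ ∧ r1 c b₂) →
      ∃ d, ReflTransGen r4 b₁ d ∧ ReflTransGen r4 b₂ d)
    (h4 : ∀ b₁ b₂, (∃ c, r4 c b₁ ∧ r0 c b₂) →
      ∃ d, ReflTransGen r4 b₁ d ∧ ReflGen r4 b₂ d) {c : S}
    (hc : ReflTransGen (r0 ⊔ r1) a c) : ReflTransGen (r0 ⊔ r1) c a' := by
  induction hc with
  | refl => exact hnf₁
  | tail hb hbc ih =>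
    obtain ⟨k, p⟩ := CountedPath.exists_of_reflTransGen hb
    exact reflTransGen_of_countedPath_of_step hr4 hnf₂ h1 hbound h3 h4 k _ p ih _
      ((hr4 _ _).2 ⟨hbc, hb⟩)

theorem acc_of_countedPath
    (h1 : WellFounded (fun b c => r0 c b ∧ ReflTransGen (r0 ⊔ r1) a b))
    (hbound : ∀ m, CountedPath r0 r1 a a' m → m ≤ n)
    (hnorm : ∀ c, ReflTransGen (r0 ⊔ r1) a c → ReflTransGen (r0 ⊔ r1) c a') (k : ℕ) (c : S) :
    ReflTransGen (r0 ⊔ r1) a c → CountedPath r0 r1 a c k → Acc (flip (r0 ⊔ r1)) c := by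
  induction k, c using h1.induction_bounded_lex n with
  | ih k c IHk IHc =>
    intro hc p
    refine .intro c fun b hcb => ?_
    have hb := hc.tail hcb
    rcases hcb with hcb | hcb
    · exact IHc b ⟨hcb, hb⟩ hb (p.tail_left hcb)
    · have p' := p.tail_right hcb
      exact IHk (k + 1) b k.lt_succ_self (p'.le_of_reflTransGen hbound (hnorm b hb)) hb p'

end Klop

theorem stmt0_general {S : Type*} (r0 r1 r2 r3 r4 : S → S → Prop) (A : Set S)
    (a a' : S) (n : ℕ)
    (hr2 : ∀ x z, r2 x z ↔ ∃ y, ReflTransGen r0 x y ∧ r1 y z)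
    (hr3 : ∀ x y, r3 x y ↔ r0 x y ∨ r1 x y)
    (hA : ∀ b, b ∈ A ↔ ReflTransGen r3 a b)
    (hr4 : ∀ x y, r4 x y ↔ r3 x y ∧ x ∈ A)
    (hnf₁ : ReflTransGen r3 a a')
    (hnf₂ : ∀ b, ¬ r3 a' b)
    -- (1) the reverse of the range-restriction of →₀ to A is well-founded
    (h1 : WellFounded (fun b c => r0 c b ∧ b ∈ A))
    -- (2) upper bound n on the length of →₂-derivations from a reaching a' by →₀*
    (h2 : ∀ (m : ℕ) (b : ℕ → S), b 0 = a → (∀ i < m, r2 (b i) (b (i + 1))) →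
      ReflTransGen r0 (b m) a' → m ≤ n)
    -- (3) peaks of →₄ against →₁ are joinable by →₄* on both sides
    (h3 : ∀ b₁ b₂, (∃ c, r4 c b₁ ∧ r1 c b₂) →
      ∃ d, ReflTransGen r4 b₁ d ∧ ReflTransGen r4 b₂ d)
    -- (4) peaks of →₄ against →₀ are joinable by →₄* and →₄⁼
    (h4 : ∀ b₁ b₂, (∃ c, r4 c b₁ ∧ r0 c b₂) →
      ∃ d, ReflTransGen r4 b₁ d ∧ ReflGen r4 b₂ d) :
    WellFounded (fun x y => r4 y x) := by
  obtain rfl : r3 = r0 ⊔ r1 := funext₂ fun x y => propext (hr3 x y)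
  obtain rfl : A = {b | ReflTransGen (r0 ⊔ r1) a b} := Set.ext hA
  have hbound (m : ℕ) : CountedPath r0 r1 a a' m → m ≤ n := fun ⟨b, hb0, hb, hbm⟩ =>
    h2 m b hb0 (fun i hi => (hr2 _ _).2 (hb i hi)) hbm
  have hnorm c : ReflTransGen (r0 ⊔ r1) a c → ReflTransGen (r0 ⊔ r1) c a' :=
    reflTransGen_of_reachable hr4 hnf₁ hnf₂ h1 hbound h3 h4
  refine ⟨fun c => ?_⟩
  by_cases hc : ReflTransGen (r0 ⊔ r1) a c
  · obtain ⟨k, p⟩ := CountedPath.exists_of_reflTransGen hc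
    exact Subrelation.accessible (fun h => ((hr4 _ _).1 h).1)
      (acc_of_countedPath h1 hbound hnorm k c hc p)
  · exact .intro c fun b hb => absurd ((hr4 c b).1 hb).2 hc

/-- generalization of Klop's Theorem I.5.18, the paper's main tool.
Relations `r0` (`→₀`), `r1` (`→₁`) on `S`; `r2 = →₀* ∘ →₁`; `r3 = →₀ ∪ →₁`;
`a ∈ dom →₃`; `a'` a `→₃`-normal form of `a`; `A = {b | a →₃* b}`;
`r4` the domain-restriction of `→₃` to `A`.  Under hypotheses (1)–(4),
the reverse of `→₄` is well-founded. -/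
theorem stmt0 {S : Type*} (r0 r1 r2 r3 r4 : S → S → Prop) (A : Set S)
    (a a' : S) (n : ℕ)
    (hr2 : ∀ x z, r2 x z ↔ ∃ y, ReflTransGen r0 x y ∧ r1 y z)
    (hr3 : ∀ x y, r3 x y ↔ r0 x y ∨ r1 x y)
    (hA : ∀ b, b ∈ A ↔ ReflTransGen r3 a b)
    (hr4 : ∀ x y, r4 x y ↔ r3 x y ∧ x ∈ A)
    (hadom : ∃ b, r3 a b)
    (hnf₁ : ReflTransGen r3 a a')
    (hnf₂ : ∀ b, ¬ r3 a' b)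
    -- (1) the reverse of the range-restriction of →₀ to A is well-founded
    (h1 : WellFounded (fun b c => r0 c b ∧ b ∈ A))
    -- (2) upper bound n on the length of →₂-derivations from a reaching a' by →₀*
    (h2 : ∀ (m : ℕ) (b : ℕ → S), b 0 = a → (∀ i < m, r2 (b i) (b (i + 1))) →
      ReflTransGen r0 (b m) a' → m ≤ n)
    -- (3) peaks of →₄ against →₁ are joinable by →₄* on both sides
    (h3 : ∀ b₁ b₂, (∃ c, r4 c b₁ ∧ r1 c b₂) →
      ∃ d, ReflTransGen r4 b₁ d ∧ ReflTransGen r4 b₂ d)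
    -- (4) peaks of →₄ against →₀ are joinable by →₄* and →₄⁼
    (h4 : ∀ b₁ b₂, (∃ c, r4 c b₁ ∧ r0 c b₂) →
      ∃ d, ReflTransGen r4 b₁ d ∧ ReflGen r4 b₂ d) :
    WellFounded (fun x y => r4 y x) :=
  stmt0_general r0 r1 r2 r3 r4 A a a' n hr2 hr3 hA hr4 hnf₁ hnf₂ h1 h2 h3 h4
end

section
/- Let →₀ and →₁ be binary relations on a set S. Set →₂ := →₀* ∘ →₁ and →₃ := →₀ ∪ →₁. Let a be an element of the domain of →₃ and let a' be a →₃-normal form of a. Set A := {b | a →₃* b} and let →₄ be the domain-restriction of →₃ to A. Assume: (2) there is an upper bound n ∈ ℕ on the length of →₂-derivations starting from a and reaching a' by →₀*, i.e., m ≤ n for every m ∈ ℕ and every sequence b₀, …, b_m with a = b₀, b_i →₂ b_{i+1} for each i ∈ {0, …, m−1}, and b_m →₀* a'; (3) for all b₁, b₂ such that some c satisfies c →₄ b₁ and c →₁ b₂, there is d with b₁ →₄* d and b₂ →₄* d; (4) for all b₁, b₂ such that some c satisfies c →₄ b₁ and c →₀ b₂, there is d with b₁ →₄* d and b₂ →₄⁼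 d. Then A = {b ∈ A | b →₄* a'}; that is, every b with a →₃* b satisfies b →₄* a' (so a' is a →₃-normal form of every element reachable from a). -/
/-!
Measure a state `c` reachable from `a` by its level: the number `q` of `→₁`-steps in a
derivation `a →₂^q ∘ →₀* c`. By (2), a state that still reaches `a'` has level at most `n`.
By downward induction on `q`, every `→₄`-descendant of a level-`q` state that reaches `a'`
reaches `a'` as well. For a single step `c →₄ b` one inducts along the path `c →₄ y →₄* a'`:
if `c →₁ y`, the peak is closed by (3) and `y` has level `q + 1`; if `c →₀ y`, it is closed
by (4), and since the `y`-side has at most one step the induction hypothesis along the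
shorter path `y →₄* a'` applies.
-/

open Relation

section

variable {S : Type*} {r0 r1 : S → S → Prop}

/-- `x (→₂ᵐ ∘ →₀*) y` with `→₂ = →₀* ∘ →₁`, with the `→₂`-derivation written out as in (2). -/
def Derives (r0 r1 : S → S → Prop) (m : ℕ) (x y : S) : Prop :=
  ∃ b : ℕ → S, b 0 = x ∧ (∀ i < m, Comp (ReflTransGen r0) r1 (b i) (b (i + 1))) ∧
    ReflTransGen r0 (b m) y

namespace Derives

theorem refl (x : S) : Derives r0 r1 0 x x :=
  ⟨fun _ => x, rfl, fun _ h => absurd h (Nat.not_lt_zero _), .refl⟩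

theorem tail₀ {m : ℕ} {x y z : S} (h : Derives r0 r1 m x y) (hyz : r0 y z) :
    Derives r0 r1 m x z :=
  let ⟨b, hb0, hb, hbm⟩ := h
  ⟨b, hb0, hb, hbm.tail hyz⟩

theorem tail₁ {m : ℕ} {x y z : S} (h : Derives r0 r1 m x y) (hyz : r1 y z) :
    Derives r0 r1 (m + 1) x z := by
  obtain ⟨b, hb0, hb, hbm⟩ := h
  refine ⟨Function.update b (m + 1) z, by simpa using hb0, fun i hi => ?_, by simp [ReflTransGen.refl]⟩
  rw [Function.update_of_ne (by omega)]
  rcases Nat.lt_succ_iff_lt_or_eq.mp hi with hi | rfl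
  · rw [Function.update_of_ne (by omega)]
    exact hb i hi
  · rw [Function.update_self]
    exact ⟨y, hbm, hyz⟩

theorem exists_le_of_reflTransGen {R : S → S → Prop} (hR : ∀ x y, R x y → r0 x y ∨ r1 x y)
    {m : ℕ} {x y z : S} (h : Derives r0 r1 m x y) (hyz : ReflTransGen R y z) :
    ∃ p, m ≤ p ∧ Derives r0 r1 p x z := by
  induction hyz with
  | refl => exact ⟨m, le_rfl, h⟩
  | tail _ hvw ih =>
    obtain ⟨p, hmp, hp⟩ := ih
    rcases hR _ _ hvw with h0 | h1
    · exact ⟨p, hmp, hp.tail₀ h0⟩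
    · exact ⟨p + 1, hmp.trans p.le_succ, hp.tail₁ h1⟩

end Derives

def LevelConfluent (R r0 r1 : S → S → Prop) (a a' : S) (q : ℕ) : Prop :=
  ∀ c d, Derives r0 r1 q a c → ReflTransGen R c a' → ReflTransGen R c d → ReflTransGen R d a'

section LevelConfluent

variable {R : S → S → Prop} {a a' : S}

theorem levelConfluent_of_lt {n q : ℕ} (hR : ∀ x y, R x y → r0 x y ∨ r1 x y)
    (hbound : ∀ m, Derives r0 r1 m a a' → m ≤ n) (hq : n < q) :
    LevelConfluent R r0 r1 a a' q := by
  intro c d hc hca' _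
  obtain ⟨p, hqp, hp⟩ := hc.exists_le_of_reflTransGen hR hca'
  exact absurd (hbound p hp) (by omega)

theorem LevelConfluent.reflTransGen_of_rel {q : ℕ} (hR : ∀ x y, R x y → r0 x y ∨ r1 x y)
    (hnf : ∀ b, ¬ R a' b)
    (hpeak₁ : ∀ c b₁ b₂, R c b₁ → R c b₂ → r1 c b₂ →
      ∃ d, ReflTransGen R b₁ d ∧ ReflTransGen R b₂ d)
    (hpeak₀ : ∀ c b₁ b₂, R c b₁ → R c b₂ → r0 c b₂ →
      ∃ d, ReflTransGen R b₁ d ∧ ReflGen R b₂ d)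
    (hsucc : LevelConfluent R r0 r1 a a' (q + 1)) {c b : S} (hc : Derives r0 r1 q a c)
    (hca' : ReflTransGen R c a') (hcb : R c b) : ReflTransGen R b a' := by
  induction hca' using ReflTransGen.head_induction_on generalizing b with
  | refl => exact absurd hcb (hnf b)
  | head hcy hya' ih =>
    rcases hR _ _ hcy with h0 | h1
    · obtain ⟨d, hbd, hyd⟩ := hpeak₀ _ _ _ hcb hcy h0
      rcases hyd with _ | hyd
      · exact hbd.trans hya'
      · exact hbd.trans (ih (hc.tail₀ h0) hyd)
    · obtain ⟨d, hbd, hyd⟩ := hpeak₁ _ _ _ hcb hcy h1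
      exact hbd.trans (hsucc _ _ (hc.tail₁ h1) hya' hyd)

theorem LevelConfluent.of_succ {q : ℕ} (hR : ∀ x y, R x y → r0 x y ∨ r1 x y)
    (hnf : ∀ b, ¬ R a' b)
    (hpeak₁ : ∀ c b₁ b₂, R c b₁ → R c b₂ → r1 c b₂ →
      ∃ d, ReflTransGen R b₁ d ∧ ReflTransGen R b₂ d)
    (hpeak₀ : ∀ c b₁ b₂, R c b₁ → R c b₂ → r0 c b₂ →
      ∃ d, ReflTransGen R b₁ d ∧ ReflGen R b₂ d)
    (hsucc : LevelConfluent R r0 r1 a a' (q + 1)) : LevelConfluent R r0 r1 a a' q := by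
  intro c d hc hca' hcd
  induction hcd using ReflTransGen.head_induction_on with
  | refl => exact hca'
  | head hcw hwd ih =>
    have hwa' := hsucc.reflTransGen_of_rel hR hnf hpeak₁ hpeak₀ hc hca' hcw
    rcases hR _ _ hcw with h0 | h1
    · exact ih (hc.tail₀ h0) hwa'
    · exact hsucc _ _ (hc.tail₁ h1) hwa' hwd

theorem reflTransGen_normalForm_of_bounded_levels {n : ℕ}
    (hR : ∀ x y, R x y → r0 x y ∨ r1 x y) (haa' : ReflTransGen R a a') (hnf : ∀ b, ¬ R a' b)
    (hbound : ∀ m, Derives r0 r1 m a a' → m ≤ n)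
    (hpeak₁ : ∀ c b₁ b₂, R c b₁ → R c b₂ → r1 c b₂ →
      ∃ d, ReflTransGen R b₁ d ∧ ReflTransGen R b₂ d)
    (hpeak₀ : ∀ c b₁ b₂, R c b₁ → R c b₂ → r0 c b₂ →
      ∃ d, ReflTransGen R b₁ d ∧ ReflGen R b₂ d)
    {b : S} (hab : ReflTransGen R a b) : ReflTransGen R b a' := by
  have hzero : LevelConfluent R r0 r1 a a' 0 :=
    Nat.decreasingInduction (motive := fun q _ => LevelConfluent R r0 r1 a a' q)
      (fun _ _ hsucc => hsucc.of_succ hR hnf hpeak₁ hpeak₀)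
      (levelConfluent_of_lt hR hbound n.lt_succ_self) (Nat.zero_le (n + 1))
  exact hzero a b (.refl a) haa' hab

end LevelConfluent

theorem reflTransGen_restrict_of_reflTransGen {r R : S → S → Prop} {a c : S}
    (hR : ∀ x y, r x y → ReflTransGen r a x → R x y) (h : ReflTransGen r a c) :
    ReflTransGen R a c := by
  induction h with
  | refl => exact .refl
  | tail hax hxy ih => exact ih.tail (hR _ _ hxy hax)

end

theorem stmt2_general {S : Type*} (r0 r1 r2 r3 r4 : S → S → Prop) (A : Set S)
    (a a' : S) (n : ℕ)
    (hr2 : ∀ x z, r2 x z ↔ ∃ y, ReflTransGen r0 x y ∧ r1 y z)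
    (hr3 : ∀ x y, r3 x y ↔ r0 x y ∨ r1 x y)
    (hA : ∀ b, b ∈ A ↔ ReflTransGen r3 a b)
    (hr4 : ∀ x y, r4 x y ↔ r3 x y ∧ x ∈ A)
    (hnf₁ : ReflTransGen r3 a a')
    (hnf₂ : ∀ b, ¬ r3 a' b)
    -- (2) upper bound n on the length of →₂-derivations from a reaching a' by →₀*
    (h2 : ∀ (m : ℕ) (b : ℕ → S), b 0 = a → (∀ i < m, r2 (b i) (b (i + 1))) →
      ReflTransGen r0 (b m) a' → m ≤ n)
    -- (3) peaks of →₄ against →₁ are joinable by →₄* on both sides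
    (h3 : ∀ b₁ b₂, (∃ c, r4 c b₁ ∧ r1 c b₂) →
      ∃ d, ReflTransGen r4 b₁ d ∧ ReflTransGen r4 b₂ d)
    -- (4) peaks of →₄ against →₀ are joinable by →₄* and →₄⁼
    (h4 : ∀ b₁ b₂, (∃ c, r4 c b₁ ∧ r0 c b₂) →
      ∃ d, ReflTransGen r4 b₁ d ∧ ReflGen r4 b₂ d) :
    A = {b ∈ A | ReflTransGen r4 b a'} := by
  have hr4_split : ∀ x y, r4 x y → r0 x y ∨ r1 x y :=
    fun x y h => (hr3 x y).1 ((hr4 x y).1 h).1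
  have hlift : ∀ {c}, ReflTransGen r3 a c → ReflTransGen r4 a c :=
    reflTransGen_restrict_of_reflTransGen fun x y hxy hax => (hr4 x y).2 ⟨hxy, (hA x).2 hax⟩
  have hbound : ∀ m, Derives r0 r1 m a a' → m ≤ n := fun m ⟨b, hb0, hb, hbm⟩ =>
    h2 m b hb0 (fun i hi => (hr2 _ _).2 (hb i hi)) hbm
  ext b
  refine ⟨fun hb => ⟨hb, ?_⟩, fun hb => hb.1⟩
  exact reflTransGen_normalForm_of_bounded_levels hr4_split (hlift hnf₁)
    (fun b h => hnf₂ b ((hr4 a' b).1 h).1) hbound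
    (fun c b₁ b₂ hcb₁ _ h1 => h3 b₁ b₂ ⟨c, hcb₁, h1⟩)
    (fun c b₁ b₂ hcb₁ _ h0 => h4 b₁ b₂ ⟨c, hcb₁, h0⟩) (hlift ((hA b).1 hb))

/-- Claims 2 and 3 in the proof of the paper's main theorem.
Under hypotheses (2), (3), (4), the set `A = {b | a →₃* b}` equals
`{b ∈ A | b →₄* a'}`; i.e. every `b` reachable from `a` reduces to `a'`
by `→₄`. -/
theorem stmt2 {S : Type*} (r0 r1 r2 r3 r4 : S → S → Prop) (A : Set S)
    (a a' : S) (n : ℕ)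
    (hr2 : ∀ x z, r2 x z ↔ ∃ y, ReflTransGen r0 x y ∧ r1 y z)
    (hr3 : ∀ x y, r3 x y ↔ r0 x y ∨ r1 x y)
    (hA : ∀ b, b ∈ A ↔ ReflTransGen r3 a b)
    (hr4 : ∀ x y, r4 x y ↔ r3 x y ∧ x ∈ A)
    (hadom : ∃ b, r3 a b)
    (hnf₁ : ReflTransGen r3 a a')
    (hnf₂ : ∀ b, ¬ r3 a' b)
    -- (2) upper bound n on the length of →₂-derivations from a reaching a' by →₀*
    (h2 : ∀ (m : ℕ) (b : ℕ → S), b 0 = a → (∀ i < m, r2 (b i) (b (i + 1))) →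
      ReflTransGen r0 (b m) a' → m ≤ n)
    -- (3) peaks of →₄ against →₁ are joinable by →₄* on both sides
    (h3 : ∀ b₁ b₂, (∃ c, r4 c b₁ ∧ r1 c b₂) →
      ∃ d, ReflTransGen r4 b₁ d ∧ ReflTransGen r4 b₂ d)
    -- (4) peaks of →₄ against →₀ are joinable by →₄* and →₄⁼
    (h4 : ∀ b₁ b₂, (∃ c, r4 c b₁ ∧ r0 c b₂) →
      ∃ d, ReflTransGen r4 b₁ d ∧ ReflGen r4 b₂ d) :
    A = {b ∈ A | ReflTransGen r4 b a'} :=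
  stmt2_general r0 r1 r2 r3 r4 A a a' n hr2 hr3 hA hr4 hnf₁ hnf₂ h2 h3 h4
end
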